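/- Let G be a simple graph on a finite vertex type V, let d, L ∈ ℕ, and let F₀, …, F_{L−1} : (Fin d → ℝ) → (Fin d → ℝ) → (Fin d → ℝ) be arbitrary layer update functions. Given an input x : V → (Fin d → ℝ), define y : ℕ → V → (Fin d → ℝ) by y 0 v = x v and y (l+1) v = F_l (y l v) (∑_{u ∈ Γ(v)} y l u), where Γ(v) is the neighbor set of v in G. If x, x' : V → (Fin d → ℝ) agree on every vertex u that is reachable from v with graph distance from v to u at most L, then the corresponding outputs satisfy y L v = y' L v. That is, the output at v of an L-layer graph neural network with one-hop aggregation at each layer depends only on the inputs in the L-hop neighborhood of v; in particular such networks belong to the L-local-gather computational model. -/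
import Mathlib

/-- An `L`-layer graph neural network with one-hop aggregation: `y 0 v = x v` and
`y (l+1) v = F l (y l v) (∑_{u ∈ Γ(v)} y l u)`. -/
def gnn {V : Type*} [Fintype V] (G : SimpleGraph V) [DecidableRel G.Adj] {d : ℕ}
    (F : ℕ → (Fin d → ℝ) → (Fin d → ℝ) → (Fin d → ℝ)) (x : V → Fin d → ℝ) :
    ℕ → V → (Fin d → ℝ)
  | 0, v => x v
  | l + 1, v => F l (gnn G F x l v) (∑ u ∈ G.neighborFinset v, gnn G F x l u)

/-- The output at `v` of an `L`-layer graph neural network with one-hop aggregation at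
each layer depends only on the inputs in the `L`-hop neighborhood of `v`: such networks
belong to the `L`-local-gather computational model. -/
theorem gnn_is_L_local {V : Type*} [Fintype V] (G : SimpleGraph V) [DecidableRel G.Adj]
    {d : ℕ} (L : ℕ) (F : ℕ → (Fin d → ℝ) → (Fin d → ℝ) → (Fin d → ℝ))
    (x x' : V → Fin d → ℝ) (v : V)
    (h : ∀ u : V, G.Reachable v u → G.dist v u ≤ L → x u = x' u) :
    gnn G F x L v = gnn G F x' L v := by
  induction L generalizing v with
  | zero => exact h v (SimpleGraph.Reachable.refl v) (by simp)
  | succ L ih =>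
    simp only [gnn]
    have h1 : gnn G F x L v = gnn G F x' L v :=
      ih v (fun u hr hd => h u hr (hd.trans (Nat.le_succ L)))
    have h2 : (∑ u ∈ G.neighborFinset v, gnn G F x L u)
        = ∑ u ∈ G.neighborFinset v, gnn G F x' L u := by
      refine Finset.sum_congr rfl fun u hu => ?_
      rw [SimpleGraph.mem_neighborFinset] at hu
      refine ih u (fun w hr hd => h w (hu.reachable.trans hr) ?_)
      obtain ⟨p, hp⟩ := hr.exists_walk_length_eq_dist
      have := G.dist_le ((SimpleGraph.Walk.cons hu SimpleGraph.Walk.nil).append p)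
      simp only [SimpleGraph.Walk.length_append, SimpleGraph.Walk.length_cons,
        SimpleGraph.Walk.length_nil, hp] at this
      omega
    rw [h1, h2]
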